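/- Let (D,W) be a consistent NMU default theory and let L be a set of literals in W. If S is a minimal strong outlier witness set for L in (D,W) (i.e., S is a strong outlier witness set for L and no proper nonempty subset of S is a strong outlier witness set for L), then the set of letters of the literals in S is contained in a single strongly connected component of the atomic dependency graph of (D,W). -/

import Mathlib

/-! Propositional formulas -/

inductive Form (V : Type) : Type
  | atom : V → Form V
  | tru  : Form V
  | fals : Form V
  | neg  : Form V → Form V
  | conj : Form V → Form V → Form V
  | disj : Form V → Form V → Form V

/-- Satisfaction of a formula by a valuation. -/
def Form.sat {V : Type} (v : V → Prop) : Form V → Prop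
  | .atom a => v a
  | .tru => True
  | .fals => False
  | .neg φ => ¬ Form.sat v φ
  | .conj φ ψ => Form.sat v φ ∧ Form.sat v ψ
  | .disj φ ψ => Form.sat v φ ∨ Form.sat v ψ

/-- Logical logClosure `T*` of a set of formulas. -/
def logClosure {V : Type} (T : Set (Form V)) : Set (Form V) :=
  { φ | ∀ v : V → Prop, (∀ ψ ∈ T, Form.sat v ψ) → Form.sat v φ }

/-- A default rule `α : β₁,…,β_m / γ` (`pre = none` means the prerequisite is missing). -/
structure Default (V : Type) : Type where
  pre   : Option (Form V)
  justs : List (Form V)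
  concl : Form V

/-- The stage sets `E_i` relative to a candidate extension `E`:
`E_0 = W`, `E_{i+1} = E_i* ∪ {γ | α:β₁,…,β_m/γ ∈ D, α ∈ E_i, ¬β₁ ∉ E, …, ¬β_m ∉ E}`. -/
def extStage {V : Type} (D : Set (Default V)) (W : Set (Form V)) (E : Set (Form V)) :
    ℕ → Set (Form V)
  | 0 => W
  | i + 1 =>
      logClosure (extStage D W E i) ∪
        { φ | ∃ d ∈ D, d.concl = φ ∧ (∀ a ∈ d.pre, a ∈ extStage D W E i) ∧
              ∀ b ∈ d.justs, Form.neg b ∉ E }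

/-- `E` is an extension of the default theory `(D, W)`. -/
def IsExtension {V : Type} (D : Set (Default V)) (W : Set (Form V)) (E : Set (Form V)) : Prop :=
  E = ⋃ i, extStage D W E i

/-- `(D, W) ⊨ φ`: every extension of `(D, W)` contains `φ`. -/
def entails {V : Type} (D : Set (Default V)) (W : Set (Form V)) (φ : Form V) : Prop :=
  ∀ E, IsExtension D W E → φ ∈ E

/-! Literals -/

/-- A literal: a letter together with a sign (`pos = true` means a positive literal). -/
structure Lit (V : Type) : Type where
  letter : V
  pos : Bool

/-- The formula corresponding to a literal. -/
def Lit.toForm {V : Type} (l : Lit V) : Form V :=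
  if l.pos then Form.atom l.letter else Form.neg (Form.atom l.letter)

/-- Negation of a literal (so that `¬¬a = a`). -/
def Lit.negate {V : Type} (l : Lit V) : Lit V := ⟨l.letter, !l.pos⟩

/-- A set of literals is consistent if it contains no complementary pair. -/
def LitConsistent {V : Type} (S : Set (Lit V)) : Prop := ∀ l ∈ S, l.negate ∉ S

/-! Normal mixed unary (NMU) default theories -/

/-- An NMU default `α : β / β` with `α` empty or a single literal and `β` a single literal. -/
structure NMUDefault (V : Type) : Type where
  pre : Option (Lit V)
  concl : Lit V

/-- The general default rule corresponding to an NMU default. -/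
def NMUDefault.toDefault {V : Type} (d : NMUDefault V) : Default V :=
  ⟨d.pre.map Lit.toForm, [d.concl.toForm], d.concl.toForm⟩

/-- `E` is an extension of the NMU theory `(D, W)`. -/
def NMU.IsExtension {V : Type} (D : Set (NMUDefault V)) (W : Set (Lit V))
    (E : Set (Form V)) : Prop :=
  _root_.IsExtension (NMUDefault.toDefault '' D) (Lit.toForm '' W) E

/-- The NMU theory `(D, W)` entails the literal `l`. -/
def NMU.entails {V : Type} (D : Set (NMUDefault V)) (W : Set (Lit V)) (l : Lit V) : Prop :=
  _root_.entails (NMUDefault.toDefault '' D) (Lit.toForm '' W) l.toForm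

/-- An NMU theory is normal unary (NU) if every nonempty prerequisite is positive. -/
def IsNU {V : Type} (D : Set (NMUDefault V)) : Prop :=
  ∀ d ∈ D, ∀ p ∈ d.pre, p.pos = true

/-! Atomic dependency graph -/

/-- Edge `(x, y)` of the atomic dependency graph: `x` occurs in the prerequisite and `y`
in the consequent of some default of `D`. -/
def depEdge {V : Type} (D : Set (NMUDefault V)) (x y : V) : Prop :=
  ∃ d ∈ D, (∃ p ∈ d.pre, p.letter = x) ∧ d.concl.letter = y

/-- There is a path from `x` to `y` in the atomic dependency graph. -/
def depReach {V : Type} (D : Set (NMUDefault V)) : V → V → Prop :=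
  Relation.ReflTransGen (depEdge D)

/-- A set of literals `S` influences a literal `l`. -/
def influences {V : Type} (D : Set (NMUDefault V)) (S : Set (Lit V)) (l : Lit V) : Prop :=
  ∃ t ∈ S, depReach D t.letter l.letter

/-- `S` is an outlier witness set for `L` in the NMU theory `(D, W)`. -/
def NMUWitness {V : Type} (D : Set (NMUDefault V)) (W L S : Set (Lit V)) : Prop :=
  S.Nonempty ∧ S ⊆ W \ L ∧
  (∀ l ∈ S, NMU.entails D (W \ S) l.negate) ∧
  ¬ (∀ l ∈ S, NMU.entails D (W \ (S ∪ L)) l.negate)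

/-- `S` is a strong outlier witness set for `L` in the NMU theory `(D, W)`. -/
def NMUStrongWitness {V : Type} (D : Set (NMUDefault V)) (W L S : Set (Lit V)) : Prop :=
  S.Nonempty ∧ S ⊆ W \ L ∧
  (∀ l ∈ S, NMU.entails D (W \ S) l.negate) ∧
  (∀ l ∈ S, ¬ NMU.entails D (W \ (S ∪ L)) l.negate)

/-!
Whether an NMU theory entails a literal over the letter `x` depends only on the facts over
letters from which `x` is reachable in the atomic dependency graph. Indeed, an extension is
determined by the literals it contains (its *core*), and cores of `(D, W)` restrict to cores of
the subtheory over any predecessor-closed set of letters `R`; conversely every core of that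
subtheory extends, by applying the remaining defaults greedily, to a core of `(D, W)`.

Given `a ∈ S`, the set `R` of letters reaching `a` is predecessor-closed, and `W \ S` and
`W \ (S ∩ R)` agree over `R`, as do `W \ (S ∪ L)` and `W \ ((S ∩ R) ∪ L)`. So the literals of
`S` over `R` again form a strong outlier witness set for `L`; by minimality they are all of `S`,
i.e. every letter of `S` reaches `a`.
-/

open Set

variable {V : Type}

lemma Monotone.exists_iUnion_eq_of_finite {α : Type*} {f : ℕ → Set α} (hf : Monotone f)
    (hfin : (⋃ i, f i).Finite) : ∃ N, ⋃ i, f i = f N := by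
  obtain ⟨N, hN⟩ := hf.directed_le.exists_mem_subset_of_finset_subset_biUnion
    (s := hfin.toFinset) (by simp)
  have hN' : ⋃ i, f i ⊆ f N := by simpa using hN
  exact ⟨N, hN'.antisymm (subset_iUnion f N)⟩

namespace Lit

@[simp] lemma letter_negate (l : Lit V) : l.negate.letter = l.letter := rfl

@[simp] lemma negate_negate (l : Lit V) : l.negate.negate = l := by
  cases l; simp [negate]

lemma negate_ne (l : Lit V) : l.negate ≠ l := by
  cases l; simp [negate]

lemma sat_neg_toForm (v : V → Prop) (l : Lit V) :
    Form.sat v (.neg l.toForm) ↔ Form.sat v l.negate.toForm := by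
  cases l with | mk x p => cases p <;> simp [toForm, negate, Form.sat]

end Lit

lemma LitConsistent.mono {A B : Set (Lit V)} (hB : LitConsistent B) (h : A ⊆ B) :
    LitConsistent A :=
  fun l hl hn => hB l (h hl) (h hn)

lemma LitConsistent.insert {S : Set (Lit V)} {c : Lit V} (hS : LitConsistent S)
    (hc : c.negate ∉ S) : LitConsistent (insert c S) := by
  rintro m (rfl | hm) hmn
  · rcases hmn with h | h
    exacts [m.negate_ne h, hc h]
  · rcases hmn with h | h
    · exact hc (by rw [← h, Lit.negate_negate]; exact hm)
    · exact hS m hm h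

lemma LitConsistent.of_inter_of_sdiff {S : Set (Lit V)} {R : Set V}
    (h₁ : LitConsistent (S ∩ Lit.letter ⁻¹' R)) (h₂ : LitConsistent (S \ Lit.letter ⁻¹' R)) :
    LitConsistent S := by
  intro m hm hmn
  by_cases hmR : m.letter ∈ R
  exacts [h₁ m ⟨hm, hmR⟩ ⟨hmn, hmR⟩, h₂ m ⟨hm, hmR⟩ ⟨hmn, hmR⟩]

lemma subset_logClosure (T : Set (Form V)) : T ⊆ logClosure T :=
  fun φ hφ _ hv => hv φ hφ

lemma logClosure_mono {S T : Set (Form V)} (h : S ⊆ T) : logClosure S ⊆ logClosure T :=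
  fun _ hφ v hv => hφ v fun ψ hψ => hv ψ (h hψ)

lemma logClosure_logClosure_subset (T : Set (Form V)) : logClosure (logClosure T) ⊆ logClosure T :=
  fun _ hφ v hv => hφ v fun _ hψ => hψ v hv

lemma neg_toForm_mem_logClosure_iff (T : Set (Form V)) (l : Lit V) :
    Form.neg l.toForm ∈ logClosure T ↔ l.negate.toForm ∈ logClosure T :=
  ⟨fun h v hv => (Lit.sat_neg_toForm v l).1 (h v hv),
    fun h v hv => (Lit.sat_neg_toForm v l).2 (h v hv)⟩

lemma LitConsistent.sat_toForm {T : Set (Lit V)} (hT : LitConsistent T) {m : Lit V}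
    (hm : m ∈ T) : Form.sat (fun y => (⟨y, true⟩ : Lit V) ∈ T) m.toForm := by
  rcases m with ⟨y, _ | _⟩
  · exact fun h => hT _ h hm
  · exact hm

lemma toForm_mem_logClosure_iff {T : Set (Lit V)} (hT : LitConsistent T) (l : Lit V) :
    l.toForm ∈ logClosure (Lit.toForm '' T) ↔ l ∈ T := by
  refine ⟨fun h => ?_, fun h => subset_logClosure _ (mem_image_of_mem _ h)⟩
  by_contra hl
  have hT' : LitConsistent (insert l.negate T) := hT.insert (by simpa using hl)
  have hsat := h _ fun _ ⟨m, hm, hψ⟩ => hψ ▸ hT'.sat_toForm (mem_insert_of_mem _ hm)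
  exact (Lit.sat_neg_toForm _ l).2 (hT'.sat_toForm (mem_insert _ _)) hsat

lemma logClosure_extStage_subset {D : Set (Default V)} {W E : Set (Form V)} (i : ℕ) :
    logClosure (extStage D W E i) ⊆ extStage D W E (i + 1) :=
  subset_union_left

lemma IsExtension.mem_of_imp {D : Set (Default V)} {W E : Set (Form V)} (hE : IsExtension D W E)
    {ψ φ : Form V} (hψ : ψ ∈ E) (h : ∀ v, Form.sat v ψ → Form.sat v φ) : φ ∈ E := by
  rw [hE] at hψ ⊢
  obtain ⟨i, hi⟩ := mem_iUnion.1 hψ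
  exact mem_iUnion.2 ⟨i + 1, logClosure_extStage_subset i fun v hv => h v (hv ψ hi)⟩

def IsPredClosed (D : Set (NMUDefault V)) (R : Set V) : Prop :=
  ∀ ⦃x y⦄, depEdge D x y → y ∈ R → x ∈ R

namespace NMU

/-- Reiter's construction at the level of literals, with justifications checked against `B`. -/
def litStage (D : Set (NMUDefault V)) (W B : Set (Lit V)) : ℕ → Set (Lit V)
  | 0 => W
  | i + 1 => litStage D W B i ∪
      { c | ∃ d ∈ D, d.concl = c ∧ (∀ p ∈ d.pre, p ∈ litStage D W B i) ∧ c.negate ∉ B }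

/-- The literals of an extension: the extensions are exactly the closures of the cores
(`isExtension_logClosure`, `exists_isCore_of_isExtension`). -/
def IsCore (D : Set (NMUDefault V)) (W T : Set (Lit V)) : Prop :=
  T = ⋃ i, litStage D W T i

variable {D : Set (NMUDefault V)} {W B T U : Set (Lit V)} {E : Set (Form V)} {R : Set V}

lemma litStage_mono : Monotone (litStage D W B) :=
  monotone_nat_of_le_succ fun _ => subset_union_left

lemma mem_litStage {m : Lit V} : ∀ {i}, m ∈ litStage D W B i →
    m ∈ W ∨ ∃ d ∈ D, d.concl = m ∧ m.negate ∉ B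
  | 0, h => Or.inl h
  | _ + 1, Or.inl h => mem_litStage h
  | _ + 1, Or.inr ⟨d, hd, hc, _, hneg⟩ => Or.inr ⟨d, hd, hc, hneg⟩

lemma iUnion_litStage_subset : ⋃ i, litStage D W B i ⊆ W ∪ NMUDefault.concl '' D :=
  iUnion_subset fun _ _ hm => (mem_litStage hm).imp id fun ⟨d, hd, hc, _⟩ => ⟨d, hd, hc⟩

lemma exists_iUnion_litStage_eq (hD : D.Finite) (hW : W.Finite) :
    ∃ N, ⋃ i, litStage D W B i = litStage D W B N :=
  litStage_mono.exists_iUnion_eq_of_finite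
    ((hW.union (hD.image _)).subset iUnion_litStage_subset)

lemma concl_mem_iUnion_litStage {d : NMUDefault V} (hd : d ∈ D)
    (hpre : ∀ p ∈ d.pre, p ∈ ⋃ i, litStage D W B i) (hneg : d.concl.negate ∉ B) :
    d.concl ∈ ⋃ i, litStage D W B i := by
  obtain ⟨i, hi⟩ : ∃ i, ∀ p ∈ d.pre, p ∈ litStage D W B i := by
    cases hp : d.pre with
    | none => simp
    | some p =>
      obtain ⟨i, hi⟩ := mem_iUnion.1 (hpre p hp)
      exact ⟨i, by simpa using hi⟩
  exact mem_iUnion.2 ⟨i + 1, Or.inr ⟨d, hd, rfl, hi, hneg⟩⟩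

/-- A conclusion is only added when its complement is not in `B`, so if `B` contains everything
that gets added, no complementary pair can arise outside `W`. -/
lemma litConsistent_iUnion_litStage (hW : LitConsistent W) (hB : ⋃ i, litStage D W B i ⊆ B) :
    LitConsistent (⋃ i, litStage D W B i) := by
  intro m hm hmn
  rcases mem_litStage (mem_iUnion.1 hm).choose_spec with hmW | ⟨-, -, -, hneg⟩
  · rcases mem_litStage (mem_iUnion.1 hmn).choose_spec with hnW | ⟨-, -, -, hneg⟩
    · exact hW m hmW hnW
    · exact hneg (by simpa using hB hm)
  · exact hneg (hB hmn)

lemma iUnion_litStage_subset_of_closed (hWT : W ⊆ T)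
    (hT : ∀ d ∈ D, (∀ p ∈ d.pre, p ∈ T) → d.concl.negate ∉ T → d.concl ∈ T) :
    ⋃ i, litStage D W T i ⊆ T :=
  iUnion_subset fun i => by
    induction i with
    | zero => exact hWT
    | succ i ih =>
      rintro _ (hm | ⟨d, hd, rfl, hpre, hneg⟩)
      exacts [ih hm, hT d hd (fun p hp => ih (hpre p hp)) hneg]

namespace IsCore

lemma subset (hT : IsCore D W T) : W ⊆ T :=
  hT ▸ subset_iUnion (litStage D W T) 0

lemma litConsistent (hW : LitConsistent W) (hT : IsCore D W T) : LitConsistent T := by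
  have := litConsistent_iUnion_litStage (D := D) hW hT.symm.subset
  rwa [← hT] at this

lemma concl_mem (hT : IsCore D W T) {d : NMUDefault V} (hd : d ∈ D)
    (hpre : ∀ p ∈ d.pre, p ∈ T) (hneg : d.concl.negate ∉ T) : d.concl ∈ T := by
  rw [hT] at hpre ⊢
  exact concl_mem_iUnion_litStage hd hpre hneg

end IsCore

lemma toForm_image_litStage_subset (hblock : ∀ c : Lit V, Form.neg c.toForm ∈ E ↔ c.negate ∈ B) :
    ∀ i, Lit.toForm '' litStage D W B i ⊆
      extStage (NMUDefault.toDefault '' D) (Lit.toForm '' W) E i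
  | 0 => subset_rfl
  | i + 1 => by
    rintro _ ⟨c, hc | ⟨d, hd, rfl, hpre, hneg⟩, rfl⟩
    · exact Or.inl (subset_logClosure _ (toForm_image_litStage_subset hblock i ⟨c, hc, rfl⟩))
    · refine Or.inr ⟨d.toDefault, mem_image_of_mem _ hd, rfl, ?_, ?_⟩
      · intro _ ha
        obtain ⟨p, hp, rfl⟩ := Option.mem_map.1 ha
        exact toForm_image_litStage_subset hblock i ⟨p, hpre p hp, rfl⟩
      · simpa [NMUDefault.toDefault, hblock] using hneg

lemma extStage_subset_logClosure (hblock : ∀ c : Lit V, Form.neg c.toForm ∈ E ↔ c.negate ∈ B)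
    (hc : LitConsistent (⋃ i, litStage D W B i)) :
    ∀ i, extStage (NMUDefault.toDefault '' D) (Lit.toForm '' W) E i ⊆
      logClosure (Lit.toForm '' litStage D W B i)
  | 0 => subset_logClosure _
  | i + 1 => by
    have ih := extStage_subset_logClosure hblock hc i
    rintro φ (hφ | ⟨_, ⟨d, hd, rfl⟩, rfl, hpre, hjust⟩)
    · exact logClosure_mono (image_mono (litStage_mono i.le_succ))
        (logClosure_logClosure_subset _ (logClosure_mono ih hφ))
    · refine subset_logClosure _ ⟨d.concl, Or.inr ⟨d, hd, rfl, fun p hp => ?_, ?_⟩, rfl⟩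
      · exact (toForm_mem_logClosure_iff (hc.mono (subset_iUnion _ i)) p).1
          (ih (hpre _ (Option.mem_map_of_mem _ hp)))
      · exact (hblock _).not.1 (hjust _ (List.mem_singleton_self _))

lemma iUnion_extStage_eq (hD : D.Finite) (hW : W.Finite)
    (hblock : ∀ c : Lit V, Form.neg c.toForm ∈ E ↔ c.negate ∈ B)
    (hc : LitConsistent (⋃ i, litStage D W B i)) :
    ⋃ i, extStage (NMUDefault.toDefault '' D) (Lit.toForm '' W) E i =
      logClosure (Lit.toForm '' ⋃ i, litStage D W B i) := by
  obtain ⟨N, hN⟩ := exists_iUnion_litStage_eq (B := B) hD hW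
  refine (iUnion_subset fun i => (extStage_subset_logClosure hblock hc i).trans
    (logClosure_mono (image_mono (subset_iUnion _ i)))).antisymm ?_
  rw [hN]
  exact (logClosure_mono (toForm_image_litStage_subset hblock N)).trans
    ((logClosure_extStage_subset N).trans (subset_iUnion _ (N + 1)))

lemma isExtension_logClosure (hD : D.Finite) (hW : W.Finite) (hWc : LitConsistent W)
    (hT : IsCore D W T) : NMU.IsExtension D W (logClosure (Lit.toForm '' T)) := by
  have hTc := hT.litConsistent hWc
  have hblock (c : Lit V) : Form.neg c.toForm ∈ logClosure (Lit.toForm '' T) ↔ c.negate ∈ T := by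
    rw [neg_toForm_mem_logClosure_iff, toForm_mem_logClosure_iff hTc]
  unfold NMU.IsExtension _root_.IsExtension
  rw [iUnion_extStage_eq hD hW hblock (by rwa [← hT]), ← hT]

lemma exists_isCore_of_isExtension (hD : D.Finite) (hW : W.Finite) (hWc : LitConsistent W)
    (hE : NMU.IsExtension D W E) : ∃ T, IsCore D W T ∧ E = logClosure (Lit.toForm '' T) := by
  let B : Set (Lit V) := {c | c.toForm ∈ E}
  have hblock (c : Lit V) : Form.neg c.toForm ∈ E ↔ c.negate ∈ B :=
    ⟨fun h => hE.mem_of_imp h fun v => (Lit.sat_neg_toForm v c).1,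
      fun h => hE.mem_of_imp h fun v => (Lit.sat_neg_toForm v c).2⟩
  have hstages : ⋃ i, litStage D W B i ⊆ B := iUnion_subset fun i c hc => by
    show c.toForm ∈ E
    rw [hE]
    exact mem_iUnion.2 ⟨i, toForm_image_litStage_subset hblock i (mem_image_of_mem _ hc)⟩
  have hc := litConsistent_iUnion_litStage hWc hstages
  have hET : E = logClosure (Lit.toForm '' ⋃ i, litStage D W B i) :=
    hE.trans (iUnion_extStage_eq hD hW hblock hc)
  have hBT : B = ⋃ i, litStage D W B i := by
    ext c
    show c.toForm ∈ E ↔ _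
    rw [hET]
    exact toForm_mem_logClosure_iff hc c
  exact ⟨_, congrArg (fun B' => ⋃ i, litStage D W B' i) hBT, hET⟩

theorem entails_iff_forall_isCore (hD : D.Finite) (hW : W.Finite) (hWc : LitConsistent W)
    {l : Lit V} : NMU.entails D W l ↔ ∀ T, IsCore D W T → l ∈ T := by
  refine ⟨fun h T hT => ?_, fun h E hE => ?_⟩
  · exact (toForm_mem_logClosure_iff (hT.litConsistent hWc) l).1
      (h _ (isExtension_logClosure hD hW hWc hT))
  · obtain ⟨T, hT, rfl⟩ := exists_isCore_of_isExtension hD hW hWc hE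
    exact subset_logClosure _ (mem_image_of_mem _ (h T hT))

lemma litStage_restrict (hR : IsPredClosed D R) :
    ∀ i, litStage {d ∈ D | d.concl.letter ∈ R} (W ∩ Lit.letter ⁻¹' R) (B ∩ Lit.letter ⁻¹' R) i =
      litStage D W B i ∩ Lit.letter ⁻¹' R
  | 0 => rfl
  | i + 1 => by
    ext c
    simp only [litStage, litStage_restrict hR i, mem_union, mem_inter_iff, mem_sep_iff,
      mem_preimage, Lit.letter_negate]
    constructor
    · rintro (⟨hc, hcR⟩ | ⟨d, ⟨hd, hdR⟩, rfl, hpre, hneg⟩)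
      · exact ⟨Or.inl hc, hcR⟩
      · exact ⟨Or.inr ⟨d, hd, rfl, fun p hp => (hpre p hp).1, fun h => hneg ⟨h, hdR⟩⟩, hdR⟩
    · rintro ⟨hc | ⟨d, hd, rfl, hpre, hneg⟩, hcR⟩
      · exact Or.inl ⟨hc, hcR⟩
      · exact Or.inr ⟨d, ⟨hd, hcR⟩, rfl,
          fun p hp => ⟨hpre p hp, hR ⟨d, hd, ⟨p, hp, rfl⟩, rfl⟩ hcR⟩, fun h => hneg h.1⟩

lemma IsCore.restrict (hR : IsPredClosed D R) (hT : IsCore D W T) :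
    IsCore {d ∈ D | d.concl.letter ∈ R} (W ∩ Lit.letter ⁻¹' R) (T ∩ Lit.letter ⁻¹' R) := by
  unfold IsCore
  conv_lhs => rw [hT]
  simp_rw [litStage_restrict hR, iUnion_inter]

/-- Greedily applying the defaults of a finite `D₀` to a consistent set terminates in a
consistent set closed under `D₀`; `P` is any invariant of single applications. -/
lemma exists_closed_superset {D₀ : Set (NMUDefault V)} (hD₀ : D₀.Finite)
    (P : Set (Lit V) → Prop)
    (hP : ∀ S, ∀ d ∈ D₀, P S → LitConsistent S → (∀ p ∈ d.pre, p ∈ S) → d.concl.negate ∉ S →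
      P (insert d.concl S))
    {S₀ : Set (Lit V)} (h₀ : P S₀) (hc₀ : LitConsistent S₀) :
    ∃ T, S₀ ⊆ T ∧ P T ∧ LitConsistent T ∧
      ∀ d ∈ D₀, (∀ p ∈ d.pre, p ∈ T) → d.concl.negate ∉ T → d.concl ∈ T := by
  induction hn : (NMUDefault.concl '' D₀ \ S₀).ncard using Nat.strong_induction_on
    generalizing S₀ with
  | _ n ih =>
  by_cases hstep : ∃ d ∈ D₀, (∀ p ∈ d.pre, p ∈ S₀) ∧ d.concl.negate ∉ S₀ ∧ d.concl ∉ S₀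
  · obtain ⟨d, hd, hpre, hneg, hnew⟩ := hstep
    have hlt : (NMUDefault.concl '' D₀ \ insert d.concl S₀).ncard < n :=
      hn ▸ ncard_lt_ncard ⟨sdiff_subset_sdiff_right (subset_insert _ _),
        fun h => (h ⟨⟨d, hd, rfl⟩, hnew⟩).2 (mem_insert _ _)⟩ (hD₀.image _).sdiff
    obtain ⟨T, hST, hT⟩ := ih _ hlt (hP S₀ d hd h₀ hc₀ hpre hneg) (hc₀.insert hneg) rfl
    exact ⟨T, (subset_insert _ _).trans hST, hT⟩
  · push Not at hstep
    exact ⟨S₀, subset_rfl, h₀, hc₀, hstep⟩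

lemma IsCore.subset_preimage
    (hU : IsCore {d ∈ D | d.concl.letter ∈ R} (W ∩ Lit.letter ⁻¹' R) U) :
    U ⊆ Lit.letter ⁻¹' R := by
  rw [hU]
  refine iUnion_litStage_subset.trans (union_subset inter_subset_right ?_)
  rintro _ ⟨d, hd, rfl⟩
  exact hd.2

lemma subset_iUnion_litStage_of_inter_eq (hR : IsPredClosed D R)
    (hU : IsCore {d ∈ D | d.concl.letter ∈ R} (W ∩ Lit.letter ⁻¹' R) U)
    (hTU : T ∩ Lit.letter ⁻¹' R = U) : U ⊆ ⋃ i, litStage D W T i := by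
  rw [hU, ← hTU]
  refine iUnion_mono fun i => ?_
  rw [litStage_restrict hR]
  exact inter_subset_left

lemma exists_isCore_inter_eq (hD : D.Finite) (hWc : LitConsistent W) (hR : IsPredClosed D R)
    (hU : IsCore {d ∈ D | d.concl.letter ∈ R} (W ∩ Lit.letter ⁻¹' R) U) :
    ∃ T, IsCore D W T ∧ T ∩ Lit.letter ⁻¹' R = U := by
  have hS₀ : (U ∪ W) ∩ Lit.letter ⁻¹' R = U := by
    rw [union_inter_distrib_right, inter_eq_left.2 hU.subset_preimage, union_eq_left.2 hU.subset]
  have hS₀c : LitConsistent (U ∪ W) := by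
    refine .of_inter_of_sdiff (hS₀ ▸ hU.litConsistent (hWc.mono inter_subset_left))
      (hWc.mono ?_)
    rintro m ⟨hm | hm, hmR⟩
    exacts [absurd (hU.subset_preimage hm) hmR, hm]
  -- `S` is produced from the facts by applications that stay justified in any consistent `T ⊇ S`
  let Grounded (S : Set (Lit V)) : Prop := ∀ T, LitConsistent T → S ⊆ T →
    T ∩ Lit.letter ⁻¹' R = U → S ⊆ ⋃ i, litStage D W T i
  have hground₀ : Grounded (U ∪ W) := fun T _ _ hTU =>
    union_subset (subset_iUnion_litStage_of_inter_eq hR hU hTU) (subset_iUnion (litStage D W T) 0)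
  have hstep : ∀ S, ∀ d ∈ {d ∈ D | d.concl.letter ∉ R},
      S ∩ Lit.letter ⁻¹' R = U ∧ Grounded S → LitConsistent S → (∀ p ∈ d.pre, p ∈ S) →
      d.concl.negate ∉ S →
      insert d.concl S ∩ Lit.letter ⁻¹' R = U ∧ Grounded (insert d.concl S) := by
    rintro S d ⟨hd, hdR⟩ ⟨hSU, hS⟩ - hpre -
    refine ⟨(insert_inter_of_notMem (t := Lit.letter ⁻¹' R) hdR).trans hSU,
      fun T hTc hST hTU => ?_⟩
    have hS' := hS T hTc ((subset_insert _ _).trans hST) hTU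
    refine insert_subset (concl_mem_iUnion_litStage hd (fun p hp => hS' (hpre p hp)) ?_) hS'
    exact hTc _ (hST (mem_insert _ _))
  obtain ⟨T, hST, ⟨hTU, hground⟩, hTc, hTcl⟩ :=
    exists_closed_superset (hD.subset (sep_subset _ _)) _ hstep ⟨hS₀, hground₀⟩ hS₀c
  refine ⟨T, (hground T hTc subset_rfl hTU).antisymm ?_, hTU⟩
  refine iUnion_litStage_subset_of_closed (subset_union_right.trans hST) fun d hd hpre hneg => ?_
  by_cases hdR : d.concl.letter ∈ R
  · have hpreU : ∀ p ∈ d.pre, p ∈ U := fun p hp =>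
      hTU ▸ ⟨hpre p hp, hR ⟨d, hd, ⟨p, hp, rfl⟩, rfl⟩ hdR⟩
    exact hST (Or.inl (hU.concl_mem ⟨hd, hdR⟩ hpreU fun h => hneg (hTU ▸ h).1))
  · exact hTcl d ⟨hd, hdR⟩ hpre hneg

theorem entails_iff_forall_isCore_restrict (hD : D.Finite) (hW : W.Finite)
    (hWc : LitConsistent W) (hR : IsPredClosed D R) {l : Lit V} (hl : l.letter ∈ R) :
    NMU.entails D W l ↔
      ∀ U, IsCore {d ∈ D | d.concl.letter ∈ R} (W ∩ Lit.letter ⁻¹' R) U → l ∈ U := by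
  rw [entails_iff_forall_isCore hD hW hWc]
  refine ⟨fun h U hU => ?_, fun h T hT => (h _ (hT.restrict hR)).1⟩
  obtain ⟨T, hT, rfl⟩ := exists_isCore_inter_eq hD hWc hR hU
  exact ⟨h T hT, hl⟩

theorem entails_congr_of_inter_eq (hD : D.Finite) {W₁ W₂ : Set (Lit V)} (hW₁ : W₁.Finite)
    (hW₂ : W₂.Finite) (hW₁c : LitConsistent W₁) (hW₂c : LitConsistent W₂)
    (hR : IsPredClosed D R) (hW : W₁ ∩ Lit.letter ⁻¹' R = W₂ ∩ Lit.letter ⁻¹' R)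
    {l : Lit V} (hl : l.letter ∈ R) :
    NMU.entails D W₁ l ↔ NMU.entails D W₂ l := by
  rw [entails_iff_forall_isCore_restrict hD hW₁ hW₁c hR hl,
    entails_iff_forall_isCore_restrict hD hW₂ hW₂c hR hl, hW]

end NMU

theorem NMUStrongWitness.inter_preimage {D : Set (NMUDefault V)} {W L S : Set (Lit V)}
    {R : Set V} (hD : D.Finite) (hW : W.Finite) (hWc : LitConsistent W) (hR : IsPredClosed D R)
    (hwit : NMUStrongWitness D W L S) (hne : (S ∩ Lit.letter ⁻¹' R).Nonempty) :
    NMUStrongWitness D W L (S ∩ Lit.letter ⁻¹' R) := by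
  obtain ⟨-, hSW, hent, hnent⟩ := hwit
  have hcongr {X Y : Set (Lit V)} (h : W \ X ∩ Lit.letter ⁻¹' R = W \ Y ∩ Lit.letter ⁻¹' R)
      {l : Lit V} (hl : l ∈ S ∩ Lit.letter ⁻¹' R) :
      NMU.entails D (W \ X) l.negate ↔ NMU.entails D (W \ Y) l.negate :=
    NMU.entails_congr_of_inter_eq hD hW.sdiff hW.sdiff (hWc.mono sdiff_subset)
      (hWc.mono sdiff_subset) hR h hl.2
  refine ⟨hne, inter_subset_left.trans hSW, fun l hl => (hcongr ?_ hl).1 (hent l hl.1),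
    fun l hl => (hcongr ?_ hl).not.2 (hnent l hl.1)⟩
  all_goals ext m; simp only [mem_inter_iff, mem_sdiff, mem_union, mem_preimage]; tauto

theorem minimal_strong_witness_in_scc_general {V : Type} (D : Set (NMUDefault V)) (W : Set (Lit V))
    (L S : Set (Lit V)) (hD : D.Finite) (hW : W.Finite)
    (hcons : LitConsistent W)
    (hwit : NMUStrongWitness D W L S)
    (hmin : ∀ S' ⊆ S, S' ≠ S → ¬ NMUStrongWitness D W L S') :
    ∀ a ∈ S, ∀ b ∈ S, depReach D a.letter b.letter ∧ depReach D b.letter a.letter := by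
  have reaches : ∀ a ∈ S, ∀ b ∈ S, depReach D b.letter a.letter := by
    intro a ha b hb
    have hR : IsPredClosed D {x | depReach D x a.letter} := fun _ _ hxy hy => hy.head hxy
    have hSa := hwit.inter_preimage hD hW hcons hR ⟨a, ha, Relation.ReflTransGen.refl⟩
    have hSa_eq : S ∩ Lit.letter ⁻¹' {x | depReach D x a.letter} = S :=
      by_contra fun hne => hmin _ inter_subset_left hne hSa
    exact (hSa_eq.superset hb).2
  exact fun a ha b hb => ⟨reaches b hb a ha, reaches a ha b hb⟩

/-- If `S` is a minimal strong outlier witness set for `L` in the consistent NMU theory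
`(D, W)`, then the letters of `S` all lie in one strongly connected component of the
atomic dependency graph, i.e. they are pairwise mutually reachable. -/
theorem minimal_strong_witness_in_scc {V : Type} (D : Set (NMUDefault V)) (W : Set (Lit V))
    (L S : Set (Lit V)) (hD : D.Finite) (hW : W.Finite)
    (hcons : LitConsistent W) (hL : L ⊆ W)
    (hwit : NMUStrongWitness D W L S)
    (hmin : ∀ S' ⊆ S, S' ≠ S → ¬ NMUStrongWitness D W L S') :
    ∀ a ∈ S, ∀ b ∈ S, depReach D a.letter b.letter ∧ depReach D b.letter a.letter :=
  minimal_strong_witness_in_scc_general D W L S hD hW hcons hwit hmin
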